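/- arXiv:2209.12760 — 7 statements merged into one kernel-verified Lean document; each statement's English description precedes it below -/
import Mathlib

section
/- Let {F_N} be a sequence of bounded operators from H₁ ⊗ H₂ to K₁ ⊗ K₂ that is uniformly bounded in operator norm and converges in the strong operator topology to a bounded operator F. If each F_N has Schmidt rank at most r (i.e., F_N is a sum of at most r elementary tensor product operators), then F has Schmidt rank at most r. -/
/-- A structure witnessing that `T` is the Hilbert space tensor product of `H` and `K`:
a bilinear map `tmul` whose inner products multiply and whose range spans a dense subspace. -/
structure HilbertTensorProduct (H K T : Type*)
    [NormedAddCommGroup H] [InnerProductSpace ℂ H]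
    [NormedAddCommGroup K] [InnerProductSpace ℂ K]
    [NormedAddCommGroup T] [InnerProductSpace ℂ T] [CompleteSpace T] where
  tmul : H →ₗ[ℂ] K →ₗ[ℂ] T
  inner_tmul : ∀ (x x' : H) (y y' : K),
    (inner ℂ (tmul x y) (tmul x' y') : ℂ) = (inner ℂ x x' : ℂ) * (inner ℂ y y' : ℂ)
  dense_span : Dense
    ((Submodule.span ℂ (Set.range fun p : H × K => tmul p.1 p.2) : Submodule ℂ T) : Set T)

/-- `f` is a Bessel sequence in `H`. -/
def IsBessel {H : Type*} [NormedAddCommGroup H] [InnerProductSpace ℂ H] {ι : Type*}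
    (f : ι → H) : Prop :=
  ∃ B : ℝ, 0 < B ∧ ∀ x : H,
    Summable (fun i => ‖(inner ℂ (f i) x : ℂ)‖ ^ 2) ∧
    ∑' i, ‖(inner ℂ (f i) x : ℂ)‖ ^ 2 ≤ B * ‖x‖ ^ 2

/-- `f` is a frame for `H`. -/
def IsFrame {H : Type*} [NormedAddCommGroup H] [InnerProductSpace ℂ H] {ι : Type*}
    (f : ι → H) : Prop :=
  ∃ A B : ℝ, 0 < A ∧ 0 < B ∧ ∀ x : H,
    Summable (fun i => ‖(inner ℂ (f i) x : ℂ)‖ ^ 2) ∧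
    A * ‖x‖ ^ 2 ≤ ∑' i, ‖(inner ℂ (f i) x : ℂ)‖ ^ 2 ∧
    ∑' i, ‖(inner ℂ (f i) x : ℂ)‖ ^ 2 ≤ B * ‖x‖ ^ 2

/-!
Fix `η ∈ K₂` and `y ∈ H₂`. The left slice of `F` is the operator `H₁ → K₁` with
`⟪ξ, slice x⟫ = ⟪ξ ⊗ η, F (x ⊗ y)⟫`. If `F = ∑ₖ F₁ₖ ⊗ F₂ₖ`, every left slice of `F` lies in
`span {F₁ₖ}`, so any `r + 1` left slices of `F_N` are linearly dependent. The left slices of `F`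
are pointwise limits of those of `F_N`, and linear dependence survives such limits (normalise the
coefficient vectors and use compactness of the unit sphere of `ℂ^(r+1)`), so the left slices of
`F` span a space of dimension `d ≤ r`. Take a basis `g₁, …, g_d` of it. Matrix coefficients
`A ↦ ⟪ξ, A x⟫` separate points, so the coordinate functionals of the basis are linear combinations
of them; hence the coefficient of `gₖ` in the slice at `(η, y)` is `⟪η, Gₖ y⟫` for `Gₖ` the same
combination of right slices, and `F (x ⊗ y) = ∑ₖ gₖ x ⊗ Gₖ y`.
-/

open Filter Topology Submodule

theorem not_linearIndependent_of_tendsto {𝕜 V ι : Type*} [RCLike 𝕜]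
    [AddCommGroup V] [Module 𝕜 V] [TopologicalSpace V] [ContinuousAdd V]
    [ContinuousSMul 𝕜 V] [T2Space V] [Fintype ι] {v : ℕ → ι → V} {w : ι → V}
    (hv : ∀ i, Tendsto (fun N => v N i) atTop (𝓝 (w i)))
    (hdep : ∀ N, ¬LinearIndependent 𝕜 (v N)) : ¬LinearIndependent 𝕜 w := by
  simp only [Fintype.not_linearIndependent_iff] at hdep ⊢
  choose c hc hc0 using hdep
  have hc_ne : ∀ N, c N ≠ 0 := fun N h => by
    obtain ⟨i, hi⟩ := hc0 N
    exact hi (congrFun h i)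
  set u : ℕ → ι → 𝕜 := fun N => (‖c N‖ : 𝕜)⁻¹ • c N
  have hu : ∀ N, u N ∈ Metric.sphere 0 1 := fun N => by
    simp [u, norm_smul, hc_ne N]
  obtain ⟨c', hc', φ, hφ, hlim⟩ := (isCompact_sphere (0 : ι → 𝕜) 1).tendsto_subseq hu
  refine ⟨c', ?_, ?_⟩
  · have hsum : ∀ N, ∑ i, u N i • v N i = 0 := fun N => by
      simp only [u, Pi.smul_apply, smul_assoc, ← Finset.smul_sum, hc N, smul_zero]
    refine tendsto_nhds_unique (tendsto_finsetSum _ fun i _ =>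
      ((continuous_apply i).tendsto c' |>.comp hlim).smul ((hv i).comp hφ.tendsto_atTop)) ?_
    simp only [Function.comp_def, hsum, tendsto_const_nhds]
  · by_contra! h
    have : c' = 0 := funext h
    simp [this] at hc'

theorem rank_span_le_of_forall_not_linearIndependent {K V : Type*} [DivisionRing K]
    [AddCommGroup V] [Module K V] {s : Set V} {n : ℕ}
    (h : ∀ v : Fin (n + 1) → V, (∀ i, v i ∈ s) → ¬LinearIndependent K v) :
    Module.rank K (span K s) ≤ n := by
  obtain ⟨b, hbs, hspan, hli⟩ := exists_linearIndependent K s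
  rw [← hspan, rank_span_set hli]
  by_contra! hlt
  obtain ⟨e⟩ : Nonempty (Fin (n + 1) ↪ b) := by
    rw [← Cardinal.lift_mk_le', Cardinal.mk_fin]
    simpa using Cardinal.natCast_add_one_le_iff.mpr hlt
  exact h (fun i => e i) (fun i => hbs (e i).2) (hli.comp _ e.injective)

section MatrixCoeffs

variable {𝕜 E F : Type*} [RCLike 𝕜] [NormedAddCommGroup E] [InnerProductSpace 𝕜 E]
  [NormedAddCommGroup F] [InnerProductSpace 𝕜 F]

noncomputable def ContinuousLinearMap.matrixCoeffs : (E →L[𝕜] F) →ₗ[𝕜] F × E → 𝕜 :=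
  LinearMap.pi fun p => (innerSL 𝕜 p.1 ∘L ContinuousLinearMap.apply 𝕜 F p.2).toLinearMap

@[simp]
theorem ContinuousLinearMap.matrixCoeffs_apply (A : E →L[𝕜] F) (p : F × E) :
    matrixCoeffs A p = inner 𝕜 p.1 (A p.2) := rfl

theorem ContinuousLinearMap.matrixCoeffs_injective :
    Function.Injective (matrixCoeffs : (E →L[𝕜] F) →ₗ[𝕜] F × E → 𝕜) := by
  refine (injective_iff_map_eq_zero _).mpr fun A hA => ext fun x => ?_
  simpa using congrFun hA (A x, x)

theorem LinearIndependent.span_range_inner_apply_eq_top {ι : Type*} [Finite ι]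
    {g : ι → E →L[𝕜] F} (hg : LinearIndependent 𝕜 g) :
    span 𝕜 (Set.range fun (p : F × E) i => inner 𝕜 p.1 (g i p.2)) = ⊤ := by
  have hli : LinearIndependent 𝕜 fun i (p : F × E) => inner 𝕜 p.1 (g i p.2) :=
    hg.map' ContinuousLinearMap.matrixCoeffs
      (LinearMap.ker_eq_bot.mpr ContinuousLinearMap.matrixCoeffs_injective)
  exact span_flip_eq_top_iff_linearIndependent.mpr hli

end MatrixCoeffs

namespace HilbertTensorProduct

variable {H K T : Type*} [NormedAddCommGroup H] [InnerProductSpace ℂ H]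
  [NormedAddCommGroup K] [InnerProductSpace ℂ K]
  [NormedAddCommGroup T] [InnerProductSpace ℂ T] [CompleteSpace T]
  (P : HilbertTensorProduct H K T)

theorem norm_tmul (x : H) (y : K) : ‖P.tmul x y‖ = ‖x‖ * ‖y‖ := by
  have h := P.inner_tmul x x y y
  simp only [inner_self_eq_norm_sq_to_K] at h
  have h' : ‖P.tmul x y‖ ^ 2 = (‖x‖ * ‖y‖) ^ 2 := by rw [mul_pow]; exact_mod_cast h
  exact (pow_left_inj₀ (norm_nonneg _) (by positivity) two_ne_zero).mp h'

noncomputable def tmulL : H →L[ℂ] K →L[ℂ] T :=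
  LinearMap.mkContinuous₂ P.tmul 1 fun x y => by rw [norm_tmul, one_mul]

@[simp]
theorem tmulL_apply (x : H) (y : K) : P.tmulL x y = P.tmul x y := rfl

theorem ext_inner_tmul {u v : T}
    (h : ∀ x y, inner ℂ (P.tmul x y) u = inner ℂ (P.tmul x y) v) : u = v := by
  refine P.dense_span.eq_of_inner_right ℂ fun w hw => ?_
  induction hw using span_induction with
  | mem w hw => obtain ⟨p, rfl⟩ := hw; exact h p.1 p.2
  | zero => simp
  | add w w' _ _ hw hw' => rw [inner_add_left, inner_add_left, hw, hw']
  | smul a w _ hw => rw [inner_smul_left, inner_smul_left, hw]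

end HilbertTensorProduct

section Slices

variable {H₁ H₂ K₁ K₂ T S : Type*}
  [NormedAddCommGroup H₁] [InnerProductSpace ℂ H₁] [NormedAddCommGroup H₂] [InnerProductSpace ℂ H₂]
  [NormedAddCommGroup K₁] [InnerProductSpace ℂ K₁] [NormedAddCommGroup K₂] [InnerProductSpace ℂ K₂]
  [NormedAddCommGroup T] [InnerProductSpace ℂ T] [CompleteSpace T]
  [NormedAddCommGroup S] [InnerProductSpace ℂ S] [CompleteSpace S]
  (P : HilbertTensorProduct H₁ H₂ T) (Q : HilbertTensorProduct K₁ K₂ S)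

def SchmidtRankLE (F : T →L[ℂ] S) (r : ℕ) : Prop :=
  ∃ (F₁ : Fin r → H₁ →L[ℂ] K₁) (F₂ : Fin r → H₂ →L[ℂ] K₂),
    ∀ (x : H₁) (y : H₂), F (P.tmul x y) = ∑ k, Q.tmul (F₁ k x) (F₂ k y)

noncomputable def leftSlice [CompleteSpace K₁] (F : T →L[ℂ] S) (η : K₂) (y : H₂) :
    H₁ →L[ℂ] K₁ :=
  (Q.tmulL.flip η).adjoint ∘L F ∘L P.tmulL.flip y

noncomputable def rightSlice [CompleteSpace K₂] (F : T →L[ℂ] S) (ξ : K₁) (x : H₁) :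
    H₂ →L[ℂ] K₂ :=
  (Q.tmulL ξ).adjoint ∘L F ∘L P.tmulL x

theorem inner_leftSlice_apply [CompleteSpace K₁] (F : T →L[ℂ] S) (η : K₂) (y : H₂) (ξ : K₁)
    (x : H₁) : inner ℂ ξ (leftSlice P Q F η y x) = inner ℂ (Q.tmul ξ η) (F (P.tmul x y)) := by
  simp [leftSlice, ContinuousLinearMap.adjoint_inner_right]

theorem inner_rightSlice_apply [CompleteSpace K₂] (F : T →L[ℂ] S) (ξ : K₁) (x : H₁) (η : K₂)
    (y : H₂) : inner ℂ η (rightSlice P Q F ξ x y) = inner ℂ (Q.tmul ξ η) (F (P.tmul x y)) := by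
  simp [rightSlice, ContinuousLinearMap.adjoint_inner_right]

variable {P Q}

theorem SchmidtRankLE.mono {F : T →L[ℂ] S} {d r : ℕ} (h : SchmidtRankLE P Q F d) (hdr : d ≤ r) :
    SchmidtRankLE P Q F r := by
  obtain ⟨F₁, F₂, hF⟩ := h
  have hinj := Fin.castLE_injective hdr
  refine ⟨Function.extend (Fin.castLE hdr) F₁ 0, Function.extend (Fin.castLE hdr) F₂ 0,
    fun x y => (hF x y).trans (Fintype.sum_of_injective _ hinj _ _ (fun k hk => ?_) fun k => ?_)⟩
  · simp [Function.extend_apply' _ _ _ hk]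
  · simp [hinj.extend_apply]

theorem leftSlice_eq_sum [CompleteSpace K₁] {F : T →L[ℂ] S} {r : ℕ} {F₁ : Fin r → H₁ →L[ℂ] K₁}
    {F₂ : Fin r → H₂ →L[ℂ] K₂} (hF : ∀ x y, F (P.tmul x y) = ∑ k, Q.tmul (F₁ k x) (F₂ k y))
    (η : K₂) (y : H₂) : leftSlice P Q F η y = ∑ k, inner ℂ η (F₂ k y) • F₁ k := by
  ext x
  refine ext_inner_left ℂ fun ξ => ?_
  simp [inner_leftSlice_apply, hF, inner_sum, Q.inner_tmul, inner_smul_right, mul_comm]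

theorem SchmidtRankLE.not_linearIndependent_leftSlice [CompleteSpace K₁] {F : T →L[ℂ] S}
    {r : ℕ} (h : SchmidtRankLE P Q F r) (e : Fin (r + 1) → K₂ × H₂) :
    ¬LinearIndependent ℂ fun i => leftSlice P Q F (e i).1 (e i).2 := by
  classical
  obtain ⟨F₁, F₂, hF⟩ := h
  intro hli
  have hcard := linearIndependent_le_span' _ hli (Set.range F₁) <| by
    rintro _ ⟨i, rfl⟩
    dsimp only
    rw [leftSlice_eq_sum hF]
    exact sum_mem fun k _ => smul_mem _ _ (subset_span ⟨k, rfl⟩)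
  have := (Fintype.card_range_le F₁).trans_eq (Fintype.card_fin r)
  simp only [Cardinal.mk_fintype, Fintype.card_fin, Nat.cast_le] at hcard
  omega

theorem rank_span_leftSlice_le_of_tendsto [CompleteSpace K₁] {FN : ℕ → T →L[ℂ] S}
    {F : T →L[ℂ] S} {r : ℕ}
    (hconv : ∀ z, Tendsto (fun N => FN N z) atTop (𝓝 (F z)))
    (hrank : ∀ N, SchmidtRankLE P Q (FN N) r) :
    Module.rank ℂ (span ℂ (Set.range fun p : K₂ × H₂ => leftSlice P Q F p.1 p.2)) ≤ r := by
  refine rank_span_le_of_forall_not_linearIndependent fun v hv hli => ?_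
  choose e he using hv
  obtain rfl : v = fun i => leftSlice P Q F (e i).1 (e i).2 := funext fun i => (he i).symm
  -- The slices converge only pointwise; their matrix coefficients converge in the product topology.
  refine not_linearIndependent_of_tendsto
    (v := fun N i => ContinuousLinearMap.matrixCoeffs (leftSlice P Q (FN N) (e i).1 (e i).2))
    (fun i => tendsto_pi_nhds.mpr fun p => ?_)
    (fun N hN => (hrank N).not_linearIndependent_leftSlice e (hN.of_comp _))
    (hli.map' _ (LinearMap.ker_eq_bot.mpr ContinuousLinearMap.matrixCoeffs_injective))
  simpa [inner_leftSlice_apply] using tendsto_const_nhds.inner (hconv (P.tmul p.2 (e i).2))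

theorem schmidtRankLE_of_leftSlice_mem_span [CompleteSpace K₁] [CompleteSpace K₂]
    {F : T →L[ℂ] S} {d : ℕ} {g : Fin d → H₁ →L[ℂ] K₁} (hg : LinearIndependent ℂ g)
    (hF : ∀ η y, leftSlice P Q F η y ∈ span ℂ (Set.range g)) : SchmidtRankLE P Q F d := by
  choose c hc using fun η y => (mem_span_range_iff_exists_fun ℂ).mp (hF η y)
  have hrepr : ∀ v ∈ span ℂ (Set.range fun (p : K₁ × H₁) m => inner ℂ p.1 (g m p.2)),
      ∃ G : H₂ →L[ℂ] K₂, ∀ η y, inner ℂ η (G y) = v ⬝ᵥ c η y := by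
    intro v hv
    induction hv using span_induction with
    | mem v hv =>
      obtain ⟨⟨ξ, x⟩, rfl⟩ := hv
      refine ⟨rightSlice P Q F ξ x, fun η y => ?_⟩
      rw [inner_rightSlice_apply, ← inner_leftSlice_apply, ← hc]
      simp [dotProduct, mul_comm]
    | zero => exact ⟨0, by simp⟩
    | add v w _ _ hv hw =>
      obtain ⟨G, hG⟩ := hv
      obtain ⟨G', hG'⟩ := hw
      exact ⟨G + G', by simp [hG, hG', add_dotProduct]⟩
    | smul a v _ hv =>
      obtain ⟨G, hG⟩ := hv
      exact ⟨a • G, by simp [hG, smul_dotProduct]⟩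
  classical
  choose G hG using fun k => hrepr (Pi.single k 1) (hg.span_range_inner_apply_eq_top ▸ mem_top)
  refine ⟨g, G, fun x y => Q.ext_inner_tmul fun ξ η => ?_⟩
  rw [← inner_leftSlice_apply, ← hc]
  simp [Q.inner_tmul, hG, mul_comm]

end Slices

theorem schmidtRank_le_of_sot_limit_general
    {H₁ H₂ K₁ K₂ T S : Type*}
    [NormedAddCommGroup H₁] [InnerProductSpace ℂ H₁]
    [NormedAddCommGroup H₂] [InnerProductSpace ℂ H₂]
    [NormedAddCommGroup K₁] [InnerProductSpace ℂ K₁] [CompleteSpace K₁]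
    [NormedAddCommGroup K₂] [InnerProductSpace ℂ K₂] [CompleteSpace K₂]
    [NormedAddCommGroup T] [InnerProductSpace ℂ T] [CompleteSpace T]
    [NormedAddCommGroup S] [InnerProductSpace ℂ S] [CompleteSpace S]
    (P : HilbertTensorProduct H₁ H₂ T) (Q : HilbertTensorProduct K₁ K₂ S)
    (r : ℕ) (FN : ℕ → T →L[ℂ] S) (F : T →L[ℂ] S)
    (hconv : ∀ x : T, Filter.Tendsto (fun N => FN N x) Filter.atTop (nhds (F x)))
    (hrank : ∀ N, ∃ (F₁ : Fin r → H₁ →L[ℂ] K₁) (F₂ : Fin r → H₂ →L[ℂ] K₂),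
      ∀ (x : H₁) (y : H₂), FN N (P.tmul x y) = ∑ k, Q.tmul (F₁ k x) (F₂ k y)) :
    ∃ (F₁ : Fin r → H₁ →L[ℂ] K₁) (F₂ : Fin r → H₂ →L[ℂ] K₂),
      ∀ (x : H₁) (y : H₂), F (P.tmul x y) = ∑ k, Q.tmul (F₁ k x) (F₂ k y) := by
  have hdim := rank_span_leftSlice_le_of_tendsto hconv hrank
  have := Module.rank_lt_aleph0_iff.mp (hdim.trans_lt Cardinal.natCast_lt_aleph0)
  obtain ⟨g, -, hspan, hg⟩ :=
    exists_fun_fin_finrank_span_eq ℂ (Set.range fun p : K₂ × H₂ => leftSlice P Q F p.1 p.2)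
  refine (schmidtRankLE_of_leftSlice_mem_span hg fun η y => ?_).mono
    (Module.finrank_le_of_rank_le hdim)
  rw [hspan]
  exact subset_span ⟨(η, y), rfl⟩

/-- If a uniformly bounded sequence of operators of Schmidt rank at most r converges in the
strong operator topology to F, then F has Schmidt rank at most r. -/
theorem schmidtRank_le_of_sot_limit
    {H₁ H₂ K₁ K₂ T S : Type*}
    [NormedAddCommGroup H₁] [InnerProductSpace ℂ H₁] [CompleteSpace H₁] [TopologicalSpace.SeparableSpace H₁]
    [NormedAddCommGroup H₂] [InnerProductSpace ℂ H₂] [CompleteSpace H₂] [TopologicalSpace.SeparableSpace H₂]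
    [NormedAddCommGroup K₁] [InnerProductSpace ℂ K₁] [CompleteSpace K₁] [TopologicalSpace.SeparableSpace K₁]
    [NormedAddCommGroup K₂] [InnerProductSpace ℂ K₂] [CompleteSpace K₂] [TopologicalSpace.SeparableSpace K₂]
    [NormedAddCommGroup T] [InnerProductSpace ℂ T] [CompleteSpace T] [TopologicalSpace.SeparableSpace T]
    [NormedAddCommGroup S] [InnerProductSpace ℂ S] [CompleteSpace S] [TopologicalSpace.SeparableSpace S]
    (P : HilbertTensorProduct H₁ H₂ T) (Q : HilbertTensorProduct K₁ K₂ S)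
    (r : ℕ) (FN : ℕ → T →L[ℂ] S) (F : T →L[ℂ] S) (C : ℝ)
    (hbdd : ∀ N, ‖FN N‖ ≤ C)
    (hconv : ∀ x : T, Filter.Tendsto (fun N => FN N x) Filter.atTop (nhds (F x)))
    (hrank : ∀ N, ∃ (F₁ : Fin r → H₁ →L[ℂ] K₁) (F₂ : Fin r → H₂ →L[ℂ] K₂),
      ∀ (x : H₁) (y : H₂), FN N (P.tmul x y) = ∑ k, Q.tmul (F₁ k x) (F₂ k y)) :
    ∃ (F₁ : Fin r → H₁ →L[ℂ] K₁) (F₂ : Fin r → H₂ →L[ℂ] K₂),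
      ∀ (x : H₁) (y : H₂), F (P.tmul x y) = ∑ k, Q.tmul (F₁ k x) (F₂ k y) :=
  schmidtRank_le_of_sot_limit_general P Q r FN F hconv hrank
end

section
/- Let {e_n} be an orthonormal basis of a separable Hilbert space H and {f_n} a sequence in H, and let F(f) = Σ_n ⟨f, f_n⟩ e_n. Then {f_n} is a Riesz basis for H if and only if F is a bounded invertible operator on H. -/
/-- `f` is a Riesz basis: the image of an orthonormal basis under a bounded invertible map. -/
def IsRieszBasis {H : Type*} [NormedAddCommGroup H] [InnerProductSpace ℂ H] [CompleteSpace H]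
    (f : ℕ → H) : Prop :=
  ∃ (U : H ≃L[ℂ] H) (b : HilbertBasis ℕ ℂ H), ∀ n, f n = U (b n)

open scoped InnerProductSpace InnerProduct

namespace ContinuousLinearEquiv

variable {𝕜 E F : Type*} [RCLike 𝕜]
  [NormedAddCommGroup E] [InnerProductSpace 𝕜 E] [CompleteSpace E]
  [NormedAddCommGroup F] [InnerProductSpace 𝕜 F] [CompleteSpace F]

noncomputable def adjoint (U : E ≃L[𝕜] F) : F ≃L[𝕜] E :=
  equivOfInverse ((U : E →L[𝕜] F)†) ((U.symm : F →L[𝕜] E)†)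
    (fun y => by
      rw [← ContinuousLinearMap.comp_apply, ← ContinuousLinearMap.adjoint_comp,
        coe_comp_coe_symm, ContinuousLinearMap.adjoint_id, ContinuousLinearMap.id_apply])
    (fun x => by
      rw [← ContinuousLinearMap.comp_apply, ← ContinuousLinearMap.adjoint_comp,
        coe_symm_comp_coe, ContinuousLinearMap.adjoint_id, ContinuousLinearMap.id_apply])

end ContinuousLinearEquiv

section Coefficients

variable {ι 𝕜 E X : Type*} [RCLike 𝕜]
  [NormedAddCommGroup E] [InnerProductSpace 𝕜 E]

theorem Orthonormal.inner_eq_of_hasSum {v : ι → E} (hv : Orthonormal 𝕜 v) {c : ι → 𝕜} {y : E}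
    (h : HasSum (fun i => c i • v i) y) (j : ι) : ⟪v j, y⟫_𝕜 = c j := by
  classical
  have hj : HasSum (fun i => ⟪v j, c i • v i⟫_𝕜) ⟪v j, y⟫_𝕜 := h.mapL (innerSL 𝕜 (v j))
  have hcoeff : (fun i => ⟪v j, c i • v i⟫_𝕜) = fun i => if i = j then c j else 0 := by
    funext i
    rw [inner_smul_right, orthonormal_iff_ite.mp hv j i]
    by_cases hij : i = j
    · simp [hij]
    · simp [hij, Ne.symm hij]
  rw [hcoeff] at hj
  exact hj.unique (hasSum_ite_eq j (c j))

variable [CompleteSpace E] [NormedAddCommGroup X] [InnerProductSpace 𝕜 X] [CompleteSpace X]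

theorem HilbertBasis.hasSum_inner_smul_iff_eq_adjoint (e : HilbertBasis ι 𝕜 E) (f : ι → X)
    (T : X →L[𝕜] E) :
    (∀ x, HasSum (fun i => ⟪f i, x⟫_𝕜 • e i) (T x)) ↔ ∀ i, f i = (T†) (e i) := by
  constructor
  · intro h i
    refine ext_inner_right 𝕜 fun x => ?_
    rw [ContinuousLinearMap.adjoint_inner_left, e.orthonormal.inner_eq_of_hasSum (h x)]
  · intro h x
    simpa only [h, ContinuousLinearMap.adjoint_inner_left, e.repr_apply_apply]
      using e.hasSum_repr (T x)

end Coefficients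

theorem isRieszBasis_iff_exists_eq_apply_hilbertBasis
    {H : Type*} [NormedAddCommGroup H] [InnerProductSpace ℂ H] [CompleteSpace H]
    (e : HilbertBasis ℕ ℂ H) (f : ℕ → H) :
    IsRieszBasis f ↔ ∃ U : H ≃L[ℂ] H, ∀ n, f n = U (e n) := by
  constructor
  · rintro ⟨U, b, hf⟩
    refine ⟨(e.repr.trans b.repr.symm).toContinuousLinearEquiv.trans U, fun n => ?_⟩
    simp [hf, e.repr_self, b.repr_symm_single]
  · rintro ⟨U, hU⟩
    exact ⟨U, e, hU⟩

theorem rieszBasis_iff_analysis_operator_invertible_general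
    {H : Type*} [NormedAddCommGroup H] [InnerProductSpace ℂ H] [CompleteSpace H]
    (e : HilbertBasis ℕ ℂ H) (f : ℕ → H) :
    IsRieszBasis f ↔
      ∃ F : H ≃L[ℂ] H,
        ∀ x : H, HasSum (fun n => (inner ℂ (f n) x : ℂ) • (e n : H)) (F x) := by
  rw [isRieszBasis_iff_exists_eq_apply_hilbertBasis e]
  constructor
  · rintro ⟨U, hU⟩
    refine ⟨U.adjoint, (e.hasSum_inner_smul_iff_eq_adjoint f _).2 fun n => ?_⟩
    rw [ContinuousLinearMap.adjoint_adjoint, hU, ContinuousLinearEquiv.coe_coe]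
  · rintro ⟨F, hF⟩
    exact ⟨F.adjoint, (e.hasSum_inner_smul_iff_eq_adjoint f F).1 hF⟩

/-- A sequence is a Riesz basis iff its analysis operator is a bounded invertible operator. -/
theorem rieszBasis_iff_analysis_operator_invertible
    {H : Type*} [NormedAddCommGroup H] [InnerProductSpace ℂ H] [CompleteSpace H]
    [TopologicalSpace.SeparableSpace H]
    (e : HilbertBasis ℕ ℂ H) (f : ℕ → H) :
    IsRieszBasis f ↔
      ∃ F : H ≃L[ℂ] H,
        ∀ x : H, HasSum (fun n => (inner ℂ (f n) x : ℂ) • (e n : H)) (F x) :=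
  rieszBasis_iff_analysis_operator_invertible_general e f
end

section
/- Let {f_{1,k,m}} (k = 1,…,r) be sequences in H₁ and {f_{2,k,n}} (k = 1,…,r) be sequences in H₂ such that for each j ∈ {1,2} the sequences {f_{j,1,·}},…,{f_{j,r,·}} are linearly independent as elements of the space of H_j-valued sequences. If the sequence F = {Σ_{k=1}^r f_{1,k,m} ⊗ f_{2,k,n}}_{m,n} is a Bessel sequence in H₁ ⊗ H₂, then {f_{j,k,n}}_n is a Bessel sequence in H_j for every (j,k) ∈ {1,2} × {1,…,r}. -/
/-!
By linear independence of the `f₂ l`, the vectors `(⟪y, f₂ l n⟫)_l` span `ℂ^r`, so finitely many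
pairs `(nⱼ, yⱼ)` and scalars `aⱼ` satisfy `∑ⱼ aⱼ ⟪yⱼ, f₂ l nⱼ⟫ = δₗₖ`. Contracting the second
factor of `F (m, nⱼ)` against `yⱼ` (the adjoint of `x ↦ x ⊗ yⱼ`) then recovers
`f₁ k m = ∑ⱼ aⱼ (· ⊗ yⱼ)† F (m, nⱼ)`, and bounded images, subsequences and finite sums of Bessel
sequences are Bessel. The second factor follows by symmetry.
-/

open scoped InnerProductSpace

section

variable {H K T : Type*} [NormedAddCommGroup H] [InnerProductSpace ℂ H]
  [NormedAddCommGroup K] [InnerProductSpace ℂ K] [NormedAddCommGroup T] [InnerProductSpace ℂ T]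
  {ι : Type*}

namespace IsBessel

theorem of_bound {f : ι → H} (B : ℝ)
    (h : ∀ x, Summable (fun i => ‖⟪f i, x⟫_ℂ‖ ^ 2) ∧ ∑' i, ‖⟪f i, x⟫_ℂ‖ ^ 2 ≤ B * ‖x‖ ^ 2) :
    IsBessel f :=
  ⟨max B 1, by positivity, fun x =>
    ⟨(h x).1, (h x).2.trans (by gcongr; exact le_max_left B 1)⟩⟩

theorem zero : IsBessel (fun _ : ι => (0 : H)) :=
  of_bound 0 fun x => by simp

theorem add {f g : ι → H} (hf : IsBessel f) (hg : IsBessel g) : IsBessel (f + g) := by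
  obtain ⟨B, -, hB⟩ := hf
  obtain ⟨C, -, hC⟩ := hg
  have hle : ∀ x i, ‖⟪(f + g) i, x⟫_ℂ‖ ^ 2 ≤ 2 * ‖⟪f i, x⟫_ℂ‖ ^ 2 + 2 * ‖⟪g i, x⟫_ℂ‖ ^ 2 := by
    intro x i
    have htri : ‖⟪(f + g) i, x⟫_ℂ‖ ≤ ‖⟪f i, x⟫_ℂ‖ + ‖⟪g i, x⟫_ℂ‖ := by
      rw [Pi.add_apply, inner_add_left]
      exact norm_add_le _ _
    nlinarith [sq_nonneg (‖⟪f i, x⟫_ℂ‖ - ‖⟪g i, x⟫_ℂ‖), norm_nonneg ⟪(f + g) i, x⟫_ℂ]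
  refine of_bound (2 * B + 2 * C) fun x => ?_
  have hsum := ((hB x).1.mul_left 2).add ((hC x).1.mul_left 2)
  have hsum' : Summable fun i => ‖⟪(f + g) i, x⟫_ℂ‖ ^ 2 :=
    .of_nonneg_of_le (fun _ => by positivity) (hle x) hsum
  refine ⟨hsum', ?_⟩
  calc ∑' i, ‖⟪(f + g) i, x⟫_ℂ‖ ^ 2
      ≤ ∑' i, (2 * ‖⟪f i, x⟫_ℂ‖ ^ 2 + 2 * ‖⟪g i, x⟫_ℂ‖ ^ 2) := hsum'.tsum_le_tsum (hle x) hsum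
    _ = 2 * ∑' i, ‖⟪f i, x⟫_ℂ‖ ^ 2 + 2 * ∑' i, ‖⟪g i, x⟫_ℂ‖ ^ 2 := by
      rw [((hB x).1.mul_left 2).tsum_add ((hC x).1.mul_left 2), tsum_mul_left, tsum_mul_left]
    _ ≤ (2 * B + 2 * C) * ‖x‖ ^ 2 := by nlinarith [(hB x).2, (hC x).2]

theorem finset_sum {κ : Type*} {f : κ → ι → H} (s : Finset κ) (hf : ∀ j ∈ s, IsBessel (f j)) :
    IsBessel (fun i => ∑ j ∈ s, f j i) := by
  classical
  induction s using Finset.induction_on with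
  | empty => simpa using zero
  | insert j s hj ih =>
    simp only [Finset.sum_insert hj]
    exact (hf j (s.mem_insert_self j)).add (ih fun l hl => hf l (Finset.mem_insert_of_mem hl))

theorem comp_injective {κ : Type*} {f : ι → H} (hf : IsBessel f) {e : κ → ι}
    (he : Function.Injective e) : IsBessel (f ∘ e) := by
  obtain ⟨B, hB, h⟩ := hf
  exact ⟨B, hB, fun x => ⟨(h x).1.comp_injective he,
    (tsum_comp_le_tsum_of_inj (h x).1 (fun _ => by positivity) he).trans (h x).2⟩⟩

theorem map [CompleteSpace H]
    [CompleteSpace K] {f : ι → K} (hf : IsBessel f) (A : K →L[ℂ] H) : IsBessel (A ∘ f) := by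
  obtain ⟨B, hB, h⟩ := hf
  have hinner : ∀ x i, ⟪(A ∘ f) i, x⟫_ℂ = ⟪f i, A.adjoint x⟫_ℂ := fun x i =>
    (ContinuousLinearMap.adjoint_inner_right A (f i) x).symm
  refine of_bound (B * ‖A.adjoint‖ ^ 2) fun x => ?_
  simp only [hinner]
  refine ⟨(h _).1, (h _).2.trans ?_⟩
  calc B * ‖A.adjoint x‖ ^ 2 ≤ B * (‖A.adjoint‖ * ‖x‖) ^ 2 := by
        gcongr
        exact A.adjoint.le_opNorm x
    _ = B * ‖A.adjoint‖ ^ 2 * ‖x‖ ^ 2 := by ring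

end IsBessel

theorem LinearIndependent.span_range_inner_eq_top {κ : Type*} [Fintype κ] {f : κ → ι → H}
    (hf : LinearIndependent ℂ f) :
    Submodule.span ℂ (Set.range fun p : ι × H => fun l => ⟪p.2, f l p.1⟫_ℂ) = ⊤ := by
  classical
  by_contra hne
  obtain ⟨φ, hφ, hker⟩ := Submodule.exists_le_ker_of_lt_top _ (lt_top_iff_ne_top.mpr hne)
  let c : κ → ℂ := fun l => φ (Pi.single l 1)
  have hc : ∑ l, c l • f l = 0 := by
    ext n
    refine ext_inner_left ℂ fun y => ?_
    have := hker (Submodule.subset_span ⟨(n, y), rfl⟩)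
    rw [LinearMap.mem_ker, LinearMap.pi_apply_eq_sum_univ] at this
    simp only [← Pi.single_apply, Pi.single_comm] at this
    simpa [c, inner_sum, inner_smul_right, mul_comm] using this
  have hc0 : c = 0 := funext (Fintype.linearIndependent_iff.mp hf c hc)
  exact hφ (LinearMap.pi_ext' fun l => LinearMap.ext_ring (by simpa [c] using congrFun hc0 l))

theorem LinearIndependent.exists_sum_inner_eq_ite {κ : Type*} [Fintype κ] [DecidableEq κ]
    {f : κ → ι → H} (hf : LinearIndependent ℂ f) (k : κ) :
    ∃ (s : Finset (ι × H)) (a : ι × H → ℂ),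
      ∀ l, ∑ p ∈ s, a p * ⟪p.2, f l p.1⟫_ℂ = if l = k then 1 else 0 := by
  have hk : Pi.single k 1 ∈
      Submodule.span ℂ (Set.range fun p : ι × H => fun l => ⟪p.2, f l p.1⟫_ℂ) := by
    rw [hf.span_range_inner_eq_top]
    trivial
  obtain ⟨c, hc⟩ := Finsupp.mem_span_range_iff_exists_finsupp.mp hk
  exact ⟨c.support, c, fun l => by simpa [Finsupp.sum, Pi.single_apply] using congrFun hc l⟩

theorem norm_apply_apply_of_inner_apply_apply (τ : H →ₗ[ℂ] K →ₗ[ℂ] T)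
    (hτ : ∀ x x' y y', ⟪τ x y, τ x' y'⟫_ℂ = ⟪x, x'⟫_ℂ * ⟪y, y'⟫_ℂ) (x : H) (y : K) :
    ‖τ x y‖ = ‖x‖ * ‖y‖ := by
  have h := hτ x x y y
  simp only [inner_self_eq_norm_sq_to_K] at h
  exact (pow_left_inj₀ (norm_nonneg _) (by positivity) two_ne_zero).mp
    (by rw [mul_pow]; exact_mod_cast h)

theorem isBessel_left_of_isBessel_sum [CompleteSpace H] [CompleteSpace T]
    (τ : H →ₗ[ℂ] K →ₗ[ℂ] T)
    (hτ : ∀ x x' y y', ⟪τ x y, τ x' y'⟫_ℂ = ⟪x, x'⟫_ℂ * ⟪y, y'⟫_ℂ)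
    {κ ι₁ ι₂ : Type*} [Fintype κ] {f₁ : κ → ι₁ → H} {f₂ : κ → ι₂ → K}
    (hf₂ : LinearIndependent ℂ f₂) (hF : IsBessel fun p : ι₁ × ι₂ => ∑ k, τ (f₁ k p.1) (f₂ k p.2))
    (k : κ) : IsBessel (f₁ k) := by
  classical
  obtain ⟨s, a, ha⟩ := hf₂.exists_sum_inner_eq_ite k
  let A : K → H →L[ℂ] T := fun y => (τ.flip y).mkContinuous ‖y‖ fun x => by
    rw [LinearMap.flip_apply, norm_apply_apply_of_inner_apply_apply τ hτ, mul_comm]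
  have hdecomp : f₁ k = fun m => ∑ p ∈ s,
      (a p • (A p.2).adjoint) (∑ l, τ (f₁ l m) (f₂ l p.1)) := by
    funext m
    refine ext_inner_left ℂ fun x => ?_
    calc ⟪x, f₁ k m⟫_ℂ = ∑ l, ⟪x, f₁ l m⟫_ℂ * ∑ p ∈ s, a p * ⟪p.2, f₂ l p.1⟫_ℂ := by
          simp [ha]
      _ = ∑ p ∈ s, a p * ∑ l, ⟪x, f₁ l m⟫_ℂ * ⟪p.2, f₂ l p.1⟫_ℂ := by
          simp only [Finset.mul_sum]
          rw [Finset.sum_comm]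
          exact Finset.sum_congr rfl fun _ _ => Finset.sum_congr rfl fun _ _ => by ring
      _ = _ := by
          simp [A, inner_sum, inner_smul_right, ContinuousLinearMap.adjoint_inner_right, hτ,
            Finset.mul_sum]
  rw [hdecomp]
  exact IsBessel.finset_sum s fun p _ => (hF.comp_injective (Prod.mk_left_injective p.1)).map _

end

theorem bessel_of_sum_tensor_bessel_general
    {H₁ H₂ T : Type*}
    [NormedAddCommGroup H₁] [InnerProductSpace ℂ H₁] [CompleteSpace H₁]
    [NormedAddCommGroup H₂] [InnerProductSpace ℂ H₂] [CompleteSpace H₂]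
    [NormedAddCommGroup T] [InnerProductSpace ℂ T] [CompleteSpace T]
    (P : HilbertTensorProduct H₁ H₂ T)
    (r : ℕ) (f₁ : Fin r → ℕ → H₁) (f₂ : Fin r → ℕ → H₂)
    (hind₁ : LinearIndependent ℂ f₁) (hind₂ : LinearIndependent ℂ f₂)
    (hB : IsBessel (fun p : ℕ × ℕ => ∑ k, P.tmul (f₁ k p.1) (f₂ k p.2))) :
    (∀ k, IsBessel (f₁ k)) ∧ (∀ k, IsBessel (f₂ k)) := by
  have hB_swap : IsBessel (fun p : ℕ × ℕ => ∑ k, P.tmul.flip (f₂ k p.1) (f₁ k p.2)) := by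
    simpa only [LinearMap.flip_apply, Function.comp_def, Prod.fst_swap, Prod.snd_swap] using
      hB.comp_injective Prod.swap_injective
  have hτ_swap : ∀ y y' x x', ⟪P.tmul.flip y x, P.tmul.flip y' x'⟫_ℂ = ⟪y, y'⟫_ℂ * ⟪x, x'⟫_ℂ :=
    fun y y' x x' => by rw [LinearMap.flip_apply, LinearMap.flip_apply, P.inner_tmul, mul_comm]
  exact ⟨isBessel_left_of_isBessel_sum P.tmul P.inner_tmul hind₂ hB,
    isBessel_left_of_isBessel_sum P.tmul.flip hτ_swap hind₁ hB_swap⟩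

/-- If a minimal sum of tensor products of sequences is Bessel, then every component sequence
is Bessel. -/
theorem bessel_of_sum_tensor_bessel
    {H₁ H₂ T : Type*}
    [NormedAddCommGroup H₁] [InnerProductSpace ℂ H₁] [CompleteSpace H₁] [TopologicalSpace.SeparableSpace H₁]
    [NormedAddCommGroup H₂] [InnerProductSpace ℂ H₂] [CompleteSpace H₂] [TopologicalSpace.SeparableSpace H₂]
    [NormedAddCommGroup T] [InnerProductSpace ℂ T] [CompleteSpace T] [TopologicalSpace.SeparableSpace T]
    (P : HilbertTensorProduct H₁ H₂ T)
    (r : ℕ) (f₁ : Fin r → ℕ → H₁) (f₂ : Fin r → ℕ → H₂)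
    (hind₁ : LinearIndependent ℂ f₁) (hind₂ : LinearIndependent ℂ f₂)
    (hB : IsBessel (fun p : ℕ × ℕ => ∑ k, P.tmul (f₁ k p.1) (f₂ k p.2))) :
    (∀ k, IsBessel (f₁ k)) ∧ (∀ k, IsBessel (f₂ k)) :=
  bessel_of_sum_tensor_bessel_general P r f₁ f₂ hind₁ hind₂ hB
end

section
/- Under the hypotheses of the previous setting, if {f_{j,k,n}}_n is a Bessel sequence in H_j for every (j,k) ∈ {1,2} × {1,…,r}, then the sequence {Σ_{k=1}^r f_{1,k,m} ⊗ f_{2,k,n}}_{m,n} is a Bessel sequence in H₁ ⊗ H₂. -/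
open scoped ENNReal NNReal InnerProductSpace InnerProduct

theorem NNReal.summable_coe_and_tsum_le_iff {ι : Type*} (a : ι → ℝ≥0) (C : ℝ≥0) :
    (Summable (fun i => (a i : ℝ)) ∧ ∑' i, (a i : ℝ) ≤ C) ↔ ∑' i, (a i : ℝ≥0∞) ≤ C := by
  constructor
  · rintro ⟨hs, hle⟩
    rw [NNReal.summable_coe] at hs
    rwa [← ENNReal.coe_tsum hs, ENNReal.coe_le_coe, ← NNReal.coe_le_coe, NNReal.coe_tsum]
  · intro hle
    have hs : Summable a :=
      ENNReal.tsum_coe_ne_top_iff_summable.mp (ne_top_of_le_ne_top ENNReal.coe_ne_top hle)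
    rw [← ENNReal.coe_tsum hs, ENNReal.coe_le_coe, ← NNReal.coe_le_coe, NNReal.coe_tsum] at hle
    exact ⟨NNReal.summable_coe.mpr hs, hle⟩

theorem enorm_sum_sq_le_card_mul_sum {κ E : Type*} [Fintype κ] [SeminormedAddCommGroup E]
    (a : κ → E) : ‖∑ k, a k‖ₑ ^ 2 ≤ Fintype.card κ * ∑ k, ‖a k‖ₑ ^ 2 := by
  have h : ‖∑ k, a k‖₊ ^ 2 ≤ Fintype.card κ * ∑ k, ‖a k‖₊ ^ 2 :=
    (pow_le_pow_left₀ (by positivity) (nnnorm_sum_le _ _) 2).trans sq_sum_le_card_mul_sum_sq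
  simpa [enorm_eq_nnnorm] using ENNReal.coe_le_coe.mpr h

namespace HilbertBasis

variable {𝕜 ι E : Type*} [RCLike 𝕜] [NormedAddCommGroup E] [InnerProductSpace 𝕜 E]
  (b : HilbertBasis ι 𝕜 E)

theorem tsum_enorm_inner_sq (x : E) : ∑' i, ‖⟪b i, x⟫_𝕜‖ₑ ^ 2 = ‖x‖ₑ ^ 2 := by
  have h : HasSum (fun i => ((‖⟪b i, x⟫_𝕜‖ ^ 2 : ℝ) : 𝕜)) ((‖x‖ ^ 2 : ℝ) : 𝕜) := by
    convert b.hasSum_inner_mul_inner x x using 1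
    · ext i
      rw [← inner_conj_symm x (b i), RCLike.conj_mul, RCLike.ofReal_pow]
    · rw [inner_self_eq_norm_sq_to_K, RCLike.ofReal_pow]
  rw [RCLike.hasSum_ofReal] at h
  have h' : HasSum (fun i => ‖⟪b i, x⟫_𝕜‖₊ ^ 2) (‖x‖₊ ^ 2) := by
    rw [← NNReal.hasSum_coe]; push_cast; exact h
  simpa [enorm_eq_nnnorm] using ENNReal.tsum_coe_eq h'

theorem eq_zero_of_forall_inner_eq_zero {x : E} (h : ∀ i, ⟪b i, x⟫_𝕜 = 0) : x = 0 := by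
  simpa [h] using (b.tsum_enorm_inner_sq x).symm

theorem inner_apply_eq_zero_of_forall [CompleteSpace E] {F : Type*} [NormedAddCommGroup F]
    [InnerProductSpace 𝕜 F] [CompleteSpace F] (A : E →L[𝕜] F) {y : F}
    (h : ∀ i, ⟪A (b i), y⟫_𝕜 = 0) (u : E) : ⟪A u, y⟫_𝕜 = 0 := by
  have hA : (A†) y = 0 :=
    b.eq_zero_of_forall_inner_eq_zero fun i => by rw [ContinuousLinearMap.adjoint_inner_right, h]
  rw [← ContinuousLinearMap.adjoint_inner_right, hA, inner_zero_right]

end HilbertBasis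

/-- Bessel bounds are taken in `ℝ≥0∞`, where every series converges, so that they can be
rearranged freely (Tonelli) without summability bookkeeping. -/
def HasBesselBound {H ι : Type*} [NormedAddCommGroup H] [InnerProductSpace ℂ H]
    (f : ι → H) (B : ℝ≥0∞) : Prop :=
  ∀ x : H, ∑' i, ‖⟪f i, x⟫_ℂ‖ₑ ^ 2 ≤ B * ‖x‖ₑ ^ 2

theorem isBessel_iff_exists_hasBesselBound {H ι : Type*} [NormedAddCommGroup H]
    [InnerProductSpace ℂ H] (f : ι → H) : IsBessel f ↔ ∃ B : ℝ≥0, HasBesselBound f B := by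
  have key (B : ℝ≥0) (x : H) : (Summable (fun i => ‖⟪f i, x⟫_ℂ‖ ^ 2) ∧
      ∑' i, ‖⟪f i, x⟫_ℂ‖ ^ 2 ≤ B * ‖x‖ ^ 2) ↔ ∑' i, ‖⟪f i, x⟫_ℂ‖ₑ ^ 2 ≤ B * ‖x‖ₑ ^ 2 := by
    have := NNReal.summable_coe_and_tsum_le_iff (fun i => ‖⟪f i, x⟫_ℂ‖₊ ^ 2) (B * ‖x‖₊ ^ 2)
    push_cast [enorm_eq_nnnorm] at this ⊢
    exact this
  constructor
  · rintro ⟨B, hB, h⟩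
    exact ⟨⟨B, hB.le⟩, fun x => (key _ x).mp (h x)⟩
  · rintro ⟨B, h⟩
    refine ⟨B + 1, by positivity, fun x => ?_⟩
    obtain ⟨hsum, hle⟩ := (key B x).mpr (h x)
    exact ⟨hsum, hle.trans (by gcongr; linarith)⟩

theorem HasBesselBound.sum {H ι κ : Type*} [NormedAddCommGroup H] [InnerProductSpace ℂ H]
    [Fintype κ] {f : κ → ι → H} {B : κ → ℝ≥0∞} (h : ∀ k, HasBesselBound (f k) (B k)) :
    HasBesselBound (fun i => ∑ k, f k i) (Fintype.card κ * ∑ k, B k) := fun x => calc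
  ∑' i, ‖⟪∑ k, f k i, x⟫_ℂ‖ₑ ^ 2 ≤ ∑' i, Fintype.card κ * ∑ k, ‖⟪f k i, x⟫_ℂ‖ₑ ^ 2 :=
      ENNReal.tsum_le_tsum fun i => by
        simpa only [sum_inner] using enorm_sum_sq_le_card_mul_sum fun k => ⟪f k i, x⟫_ℂ
  _ = Fintype.card κ * ∑ k, ∑' i, ‖⟪f k i, x⟫_ℂ‖ₑ ^ 2 := by
      rw [ENNReal.tsum_mul_left, Summable.tsum_finsetSum fun k _ => ENNReal.summable]
  _ ≤ Fintype.card κ * ∑ k, B k * ‖x‖ₑ ^ 2 := by gcongr with k; exact h k x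
  _ = Fintype.card κ * (∑ k, B k) * ‖x‖ₑ ^ 2 := by rw [mul_assoc, Finset.sum_mul]

namespace HilbertTensorProduct

open ContinuousLinearMap

variable {H₁ H₂ T : Type*}
    [NormedAddCommGroup H₁] [InnerProductSpace ℂ H₁]
    [NormedAddCommGroup H₂] [InnerProductSpace ℂ H₂]
    [NormedAddCommGroup T] [InnerProductSpace ℂ T] [CompleteSpace T]
    (P : HilbertTensorProduct H₁ H₂ T)

theorem norm_tmul_s10 (u : H₁) (v : H₂) : ‖P.tmul u v‖ = ‖u‖ * ‖v‖ := by
  have h := P.inner_tmul u u v v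
  simp only [inner_self_eq_norm_sq_to_K] at h
  have h2 : ‖P.tmul u v‖ ^ 2 = (‖u‖ * ‖v‖) ^ 2 := by rw [mul_pow]; exact_mod_cast h
  exact (pow_left_inj₀ (norm_nonneg _) (by positivity) two_ne_zero).mp h2

noncomputable def tmulLeft (u : H₁) : H₂ →L[ℂ] T :=
  (P.tmul u).mkContinuous ‖u‖ fun v => (P.norm_tmul_s10 u v).le

noncomputable def tmulRight (v : H₂) : H₁ →L[ℂ] T :=
  (P.tmul.flip v).mkContinuous ‖v‖ fun u => by rw [LinearMap.flip_apply, P.norm_tmul_s10, mul_comm]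

@[simp] theorem tmulLeft_apply (u : H₁) (v : H₂) : P.tmulLeft u v = P.tmul u v := rfl

@[simp] theorem tmulRight_apply (v : H₂) (u : H₁) : P.tmulRight v u = P.tmul u v := rfl

theorem orthonormal_tmul {ι₁ ι₂ : Type*} {e₁ : ι₁ → H₁} {e₂ : ι₂ → H₂}
    (h₁ : Orthonormal ℂ e₁) (h₂ : Orthonormal ℂ e₂) :
    Orthonormal ℂ fun p : ι₁ × ι₂ => P.tmul (e₁ p.1) (e₂ p.2) := by
  classical
  rw [orthonormal_iff_ite] at h₁ h₂ ⊢
  intro p q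
  rw [P.inner_tmul, h₁, h₂]
  by_cases hp₁ : p.1 = q.1 <;> by_cases hp₂ : p.2 = q.2 <;> simp [hp₁, hp₂, Prod.ext_iff]

theorem eq_zero_of_forall_inner_tmul_eq_zero {y : T} (h : ∀ u v, ⟪P.tmul u v, y⟫_ℂ = 0) :
    y = 0 := by
  refine P.dense_span.eq_zero_of_inner_right ℂ fun w hw => ?_
  induction hw using Submodule.span_induction with
  | mem w hw => obtain ⟨⟨u, v⟩, rfl⟩ := hw; exact h u v
  | zero => exact inner_zero_left _
  | add a b _ _ ha hb => rw [inner_add_left, ha, hb, add_zero]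
  | smul c a _ ha => rw [inner_smul_left, ha, mul_zero]

variable [CompleteSpace H₁] [CompleteSpace H₂] {ι₁ ι₂ : Type*}

noncomputable def hilbertBasis (b : HilbertBasis ι₁ ℂ H₁) (c : HilbertBasis ι₂ ℂ H₂) :
    HilbertBasis (ι₁ × ι₂) ℂ T :=
  .mkOfOrthogonalEqBot (P.orthonormal_tmul b.orthonormal c.orthonormal) <|
    (Submodule.eq_bot_iff _).mpr fun y hy => by
      have hbasis (p : ι₁ × ι₂) : ⟪P.tmul (b p.1) (c p.2), y⟫_ℂ = 0 :=
        (Submodule.mem_orthogonal _ y).mp hy _ (Submodule.subset_span ⟨p, rfl⟩)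
      refine P.eq_zero_of_forall_inner_tmul_eq_zero fun u => ?_
      exact c.inner_apply_eq_zero_of_forall (P.tmulLeft u) fun i =>
        b.inner_apply_eq_zero_of_forall (P.tmulRight (c i)) (fun l => hbasis (l, i)) u

@[simp] theorem coe_hilbertBasis (b : HilbertBasis ι₁ ℂ H₁) (c : HilbertBasis ι₂ ℂ H₂) :
    ⇑(P.hilbertBasis b c) = fun p => P.tmul (b p.1) (c p.2) :=
  HilbertBasis.coe_mkOfOrthogonalEqBot _ _

theorem tsum_enorm_adjoint_tmulLeft_sq_le {ι : Type*} {f : ι → H₁} {B : ℝ≥0∞}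
    (hf : HasBesselBound f B) (x : T) :
    ∑' m, ‖((P.tmulLeft (f m))†) x‖ₑ ^ 2 ≤ B * ‖x‖ₑ ^ 2 := by
  obtain ⟨w₁, b, -⟩ := exists_hilbertBasis ℂ H₁
  obtain ⟨w₂, c, -⟩ := exists_hilbertBasis ℂ H₂
  set Z : w₂ → H₁ := fun i => ((P.tmulRight (c i))†) x
  have hslice (m : ι) : ‖((P.tmulLeft (f m))†) x‖ₑ ^ 2 = ∑' i, ‖⟪f m, Z i⟫_ℂ‖ₑ ^ 2 := by
    simp only [← c.tsum_enorm_inner_sq, Z, adjoint_inner_right, tmulLeft_apply, tmulRight_apply]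
  have hparseval : ∑' i, ‖Z i‖ₑ ^ 2 = ‖x‖ₑ ^ 2 := by
    simp only [← (P.hilbertBasis b c).tsum_enorm_inner_sq, ← b.tsum_enorm_inner_sq, Z,
      adjoint_inner_right, tmulRight_apply, coe_hilbertBasis,
      ENNReal.tsum_prod', ENNReal.tsum_comm (α := w₁)]
  calc ∑' m, ‖((P.tmulLeft (f m))†) x‖ₑ ^ 2 = ∑' i, ∑' m, ‖⟪f m, Z i⟫_ℂ‖ₑ ^ 2 := by
        simp only [hslice, ENNReal.tsum_comm (α := ι)]
    _ ≤ ∑' i, B * ‖Z i‖ₑ ^ 2 := ENNReal.tsum_le_tsum fun i => hf (Z i)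
    _ = B * ‖x‖ₑ ^ 2 := by rw [ENNReal.tsum_mul_left, hparseval]

end HilbertTensorProduct

open ContinuousLinearMap in
theorem HasBesselBound.tmul {H₁ H₂ T ι κ : Type*}
    [NormedAddCommGroup H₁] [InnerProductSpace ℂ H₁] [CompleteSpace H₁]
    [NormedAddCommGroup H₂] [InnerProductSpace ℂ H₂] [CompleteSpace H₂]
    [NormedAddCommGroup T] [InnerProductSpace ℂ T] [CompleteSpace T]
    (P : HilbertTensorProduct H₁ H₂ T) {f : ι → H₁} {g : κ → H₂} {B₁ B₂ : ℝ≥0∞}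
    (hf : HasBesselBound f B₁) (hg : HasBesselBound g B₂) :
    HasBesselBound (fun p : ι × κ => P.tmul (f p.1) (g p.2)) (B₁ * B₂) := fun x => calc
  ∑' p : ι × κ, ‖⟪P.tmul (f p.1) (g p.2), x⟫_ℂ‖ₑ ^ 2
      = ∑' m, ∑' n, ‖⟪g n, ((P.tmulLeft (f m))†) x⟫_ℂ‖ₑ ^ 2 := by
        simp only [ENNReal.tsum_prod', adjoint_inner_right, HilbertTensorProduct.tmulLeft_apply]
    _ ≤ ∑' m, B₂ * ‖((P.tmulLeft (f m))†) x‖ₑ ^ 2 := ENNReal.tsum_le_tsum fun m => hg _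
    _ ≤ B₂ * (B₁ * ‖x‖ₑ ^ 2) := by
        rw [ENNReal.tsum_mul_left]; gcongr; exact P.tsum_enorm_adjoint_tmulLeft_sq_le hf x
    _ = B₁ * B₂ * ‖x‖ₑ ^ 2 := by ring

theorem sum_tensor_bessel_of_bessel_general
    {H₁ H₂ T : Type*}
    [NormedAddCommGroup H₁] [InnerProductSpace ℂ H₁] [CompleteSpace H₁]
    [NormedAddCommGroup H₂] [InnerProductSpace ℂ H₂] [CompleteSpace H₂]
    [NormedAddCommGroup T] [InnerProductSpace ℂ T] [CompleteSpace T]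
    (P : HilbertTensorProduct H₁ H₂ T)
    (r : ℕ) (f₁ : Fin r → ℕ → H₁) (f₂ : Fin r → ℕ → H₂)
    (h₁ : ∀ k, IsBessel (f₁ k)) (h₂ : ∀ k, IsBessel (f₂ k)) :
    IsBessel (fun p : ℕ × ℕ => ∑ k, P.tmul (f₁ k p.1) (f₂ k p.2)) := by
  choose B₁ hB₁ using fun k => (isBessel_iff_exists_hasBesselBound (f₁ k)).mp (h₁ k)
  choose B₂ hB₂ using fun k => (isBessel_iff_exists_hasBesselBound (f₂ k)).mp (h₂ k)
  rw [isBessel_iff_exists_hasBesselBound]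
  refine ⟨r * ∑ k, B₁ k * B₂ k, ?_⟩
  simpa using HasBesselBound.sum fun k => (hB₁ k).tmul P (hB₂ k)

/-- If every component sequence is Bessel, then the sum of tensor products is Bessel. -/
theorem sum_tensor_bessel_of_bessel
    {H₁ H₂ T : Type*}
    [NormedAddCommGroup H₁] [InnerProductSpace ℂ H₁] [CompleteSpace H₁] [TopologicalSpace.SeparableSpace H₁]
    [NormedAddCommGroup H₂] [InnerProductSpace ℂ H₂] [CompleteSpace H₂] [TopologicalSpace.SeparableSpace H₂]
    [NormedAddCommGroup T] [InnerProductSpace ℂ T] [CompleteSpace T] [TopologicalSpace.SeparableSpace T]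
    (P : HilbertTensorProduct H₁ H₂ T)
    (r : ℕ) (f₁ : Fin r → ℕ → H₁) (f₂ : Fin r → ℕ → H₂)
    (h₁ : ∀ k, IsBessel (f₁ k)) (h₂ : ∀ k, IsBessel (f₂ k)) :
    IsBessel (fun p : ℕ × ℕ => ∑ k, P.tmul (f₁ k p.1) (f₂ k p.2)) :=
  sum_tensor_bessel_of_bessel_general P r f₁ f₂ h₁ h₂
end

section
/- Let g ∈ L²(ℝ) be nonzero, let a, b > 0, and let u, v be positive integers. If the Gabor system G(g, a, b) = {M_{nb} T_{ma} g : m, n ∈ ℤ} is a frame for L²(ℝ) with frame bounds A and B, then the Gabor system G(g, a/u, b/v) is a frame with frame bounds uvA and uvB. -/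
open MeasureTheory

/-- The Gabor coefficient ⟨f, M_{nb} T_{ma} g⟩ in L²(ℝ). -/
noncomputable def gaborCoef (g : ℝ → ℂ) (a b : ℝ) (f : ℝ → ℂ) (m n : ℤ) : ℂ :=
  ∫ x : ℝ, f x * (starRingEnd ℂ)
    (Complex.exp (((2 * Real.pi * (n : ℝ) * b * x : ℝ) : ℂ) * Complex.I) * g (x - m * a))

/-- The Gabor system G(g, a, b) is a frame for L²(ℝ) with frame bounds A and B. -/
def GaborFrameBounds (g : ℝ → ℂ) (a b A B : ℝ) : Prop :=
  ∀ f : ℝ → ℂ, MemLp f 2 volume →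
    Summable (fun p : ℤ × ℤ => ‖gaborCoef g a b f p.1 p.2‖ ^ 2) ∧
    A * (∫ x : ℝ, ‖f x‖ ^ 2) ≤ ∑' p : ℤ × ℤ, ‖gaborCoef g a b f p.1 p.2‖ ^ 2 ∧
    ∑' p : ℤ × ℤ, ‖gaborCoef g a b f p.1 p.2‖ ^ 2 ≤ B * ∫ x : ℝ, ‖f x‖ ^ 2

/-! Writing `m = q u + r` and `n = p v + s` with `0 ≤ r < u`, `0 ≤ s < v` splits the lattice
`(a/u)ℤ × (b/v)ℤ` into `uv` cosets of `aℤ × bℤ`. On the coset of `(r a/u, s b/v)` the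
coefficients of `f` are, up to unimodular phases, the coefficients for `G(g, a, b)` of a
time-frequency shift of `f`, which has the same `L²` norm. So the frame sum of `G(g, a/u, b/v)`
is a sum of `uv` frame sums of `G(g, a, b)`, each between `A‖f‖²` and `B‖f‖²`. -/

/-- The short-time Fourier transform `⟨f, M_ω T_t g⟩`; `gaborCoef` samples it on `aℤ × bℤ`. -/
noncomputable def stft (g f : ℝ → ℂ) (t ω : ℝ) : ℂ :=
  ∫ x : ℝ, f x * (starRingEnd ℂ)
    (Complex.exp (((2 * Real.pi * ω * x : ℝ) : ℂ) * Complex.I) * g (x - t))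

/-- `M_{-d} T_{-c} f` -/
noncomputable def timeFreqShift (f : ℝ → ℂ) (c d : ℝ) : ℝ → ℂ :=
  fun y => Complex.exp (((-(2 * Real.pi * d * y)) : ℝ) * Complex.I) * f (y + c)

theorem gaborCoef_eq_stft (g f : ℝ → ℂ) (a b : ℝ) (m n : ℤ) :
    gaborCoef g a b f m n = stft g f (m * a) (n * b) := by
  simp only [gaborCoef, stft, mul_assoc]

theorem stft_add_add (g f : ℝ → ℂ) (t ω c d : ℝ) :
    stft g f (t + c) (ω + d) =
      Complex.exp ((-(2 * Real.pi * (ω + d) * c) : ℝ) * Complex.I) *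
        stft g (timeFreqShift f c d) t ω := by
  rw [stft, ← integral_add_right_eq_self _ c, stft, ← integral_const_mul]
  congr 1 with y
  simp only [timeFreqShift, map_mul, ← Complex.exp_conj, Complex.conj_ofReal, Complex.conj_I,
    add_sub_add_right_eq_sub]
  have hphase : Complex.exp ((2 * Real.pi * (ω + d) * (y + c) : ℝ) * -Complex.I) =
      Complex.exp ((-(2 * Real.pi * (ω + d) * c) : ℝ) * Complex.I) *
        Complex.exp ((-(2 * Real.pi * d * y) : ℝ) * Complex.I) *
        Complex.exp ((2 * Real.pi * ω * y : ℝ) * -Complex.I) := by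
    rw [← Complex.exp_add, ← Complex.exp_add]
    push_cast
    ring_nf
  rw [hphase]
  ring

theorem norm_stft_add_add (g f : ℝ → ℂ) (t ω c d : ℝ) :
    ‖stft g f (t + c) (ω + d)‖ = ‖stft g (timeFreqShift f c d) t ω‖ := by
  rw [stft_add_add, norm_mul, Complex.norm_exp_ofReal_mul_I, one_mul]

theorem norm_timeFreqShift (f : ℝ → ℂ) (c d y : ℝ) :
    ‖timeFreqShift f c d y‖ = ‖f (y + c)‖ := by
  rw [timeFreqShift, norm_mul, Complex.norm_exp_ofReal_mul_I, one_mul]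

theorem MeasureTheory.MemLp.timeFreqShift {f : ℝ → ℂ} (hf : MemLp f 2 volume) (c d : ℝ) :
    MemLp (timeFreqShift f c d) 2 volume := by
  have htrans : MemLp (fun y => f (y + c)) 2 volume :=
    hf.comp_measurePreserving (measurePreserving_add_right volume c)
  refine htrans.of_le ((Continuous.aestronglyMeasurable (by fun_prop)).mul
    htrans.aestronglyMeasurable) (.of_forall fun y => ?_)
  rw [norm_timeFreqShift]

theorem integral_norm_timeFreqShift_sq (f : ℝ → ℂ) (c d : ℝ) :
    ∫ y : ℝ, ‖timeFreqShift f c d y‖ ^ 2 = ∫ x : ℝ, ‖f x‖ ^ 2 := by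
  simp only [norm_timeFreqShift]
  exact integral_add_right_eq_self (fun x => ‖f x‖ ^ 2) c

theorem HasSum.prod_of_fintype {ι κ α : Type*} [Fintype ι] [AddCommMonoid α]
    [TopologicalSpace α] [ContinuousAdd α] {f : ι × κ → α} {s : ι → α}
    (hf : ∀ i, HasSum (fun k => f (i, k)) (s i)) : HasSum f (∑ i, s i) := by
  classical
  have hfiber (i : ι) : HasSum (fun p : ι × κ => if p.1 = i then f p else 0) (s i) := by
    refine ((Prod.mk_right_injective i).hasSum_iff fun p hp => ?_).mp
      (by simpa [Function.comp_def] using hf i)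
    rw [if_neg fun h => hp ⟨p.2, by rw [← h]⟩]
  simpa using hasSum_sum (s := Finset.univ) fun i _ => hfiber i

theorem norm_gaborCoef_div (g f : ℝ → ℂ) (a b : ℝ) {u v : ℕ} (hu : u ≠ 0) (hv : v ≠ 0)
    (q p : ℤ) (r s : ℕ) :
    ‖gaborCoef g (a / u) (b / v) f (q * u + r) (p * v + s)‖ =
      ‖gaborCoef g a b (timeFreqShift f (r * (a / u)) (s * (b / v))) q p‖ := by
  rw [gaborCoef_eq_stft, gaborCoef_eq_stft, ← norm_stft_add_add]
  congr 2 <;> push_cast <;> field_simp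

theorem hasSum_norm_gaborCoef_div_sq (g f : ℝ → ℂ) (a b : ℝ) (u v : ℕ) [NeZero u] [NeZero v]
    (hf : ∀ rs : Fin u × Fin v, Summable fun p : ℤ × ℤ =>
      ‖gaborCoef g a b (timeFreqShift f (rs.1 * (a / u)) (rs.2 * (b / v))) p.1 p.2‖ ^ 2) :
    HasSum (fun p : ℤ × ℤ => ‖gaborCoef g (a / u) (b / v) f p.1 p.2‖ ^ 2)
      (∑ rs : Fin u × Fin v, ∑' p : ℤ × ℤ,
        ‖gaborCoef g a b (timeFreqShift f (rs.1 * (a / u)) (rs.2 * (b / v))) p.1 p.2‖ ^ 2) := by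
  let e : (Fin u × Fin v) × (ℤ × ℤ) ≃ ℤ × ℤ := (Equiv.prodComm _ _).trans <|
    (Equiv.prodProdProdComm ℤ ℤ (Fin u) (Fin v)).trans <|
      (Int.divModEquiv u).symm.prodCongr (Int.divModEquiv v).symm
  refine e.hasSum_iff.mp (HasSum.prod_of_fintype fun rs => ?_)
  simpa [e, norm_gaborCoef_div g f a b (NeZero.ne u) (NeZero.ne v)] using (hf rs).hasSum

theorem gabor_frame_oversampling_general
    (g : ℝ → ℂ)
    (a b A B : ℝ)
    (u v : ℕ) (hu : 0 < u) (hv : 0 < v)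
    (h : GaborFrameBounds g a b A B) :
    GaborFrameBounds g (a / u) (b / v) ((u * v : ℕ) * A) ((u * v : ℕ) * B) := by
  have : NeZero u := NeZero.of_pos hu
  have : NeZero v := NeZero.of_pos hv
  intro f hf
  have hshift (rs : Fin u × Fin v) := h _ (hf.timeFreqShift (rs.1 * (a / u)) (rs.2 * (b / v)))
  simp only [integral_norm_timeFreqShift_sq] at hshift
  have hsum := hasSum_norm_gaborCoef_div_sq g f a b u v fun rs => (hshift rs).1
  have hcard (C : ℝ) : ((u * v : ℕ) : ℝ) * C * ∫ x, ‖f x‖ ^ 2 =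
      ∑ _rs : Fin u × Fin v, C * ∫ x, ‖f x‖ ^ 2 := by
    simp only [Finset.sum_const, Finset.card_univ, Fintype.card_prod, Fintype.card_fin,
      nsmul_eq_mul, mul_assoc]
  refine ⟨hsum.summable, ?_, ?_⟩ <;> rw [hsum.tsum_eq, hcard]
  · exact Finset.sum_le_sum fun rs _ => (hshift rs).2.1
  · exact Finset.sum_le_sum fun rs _ => (hshift rs).2.2

/-- Oversampling a Gabor frame: if G(g, a, b) is a frame with bounds A, B then
G(g, a/u, b/v) is a frame with bounds uvA, uvB. -/
theorem gabor_frame_oversampling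
    (g : ℝ → ℂ) (hg : MemLp g 2 volume) (hgne : ¬ g =ᵐ[volume] 0)
    (a b A B : ℝ) (ha : 0 < a) (hb : 0 < b) (hA : 0 < A) (hB : 0 < B)
    (u v : ℕ) (hu : 0 < u) (hv : 0 < v)
    (h : GaborFrameBounds g a b A B) :
    GaborFrameBounds g (a / u) (b / v) ((u * v : ℕ) * A) ((u * v : ℕ) * B) :=
  gabor_frame_oversampling_general g a b A B u v hu hv h
end

section
/- Let g ∈ L²(ℝ) be nonzero and a, b > 0. If the Gabor system G(g, a, b) is a Bessel sequence, then G(g, a', b') is a Bessel sequence for all a', b' > 0 of the form a' = a·q₁ and b' = b·q₂ with q₁, q₂ positive rational numbers. -/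
open MeasureTheory

/-- The Gabor system G(g, a, b) is a Bessel sequence in L²(ℝ). -/
def GaborBessel (g : ℝ → ℂ) (a b : ℝ) : Prop :=
  ∃ B : ℝ, 0 < B ∧ ∀ f : ℝ → ℂ, MemLp f 2 volume →
    Summable (fun p : ℤ × ℤ => ‖gaborCoef g a b f p.1 p.2‖ ^ 2) ∧
    ∑' p : ℤ × ℤ, ‖gaborCoef g a b f p.1 p.2‖ ^ 2 ≤ B * ∫ x : ℝ, ‖f x‖ ^ 2

/-!
Write `qᵢ = pᵢ / dᵢ`. The system `G(g, a q₁, b q₂)` is a subfamily of `G(g, a / d₁, b / d₂)`, so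
the Bessel bound passes to it unchanged, and it remains to pass from `(a, b)` to `(a / s, b / v)`.
The lattice `(a / s)ℤ × (b / v)ℤ` is the union of the `s v` cosets `(j a / s, k b / v) + aℤ × bℤ`,
and up to unimodular factors the coefficients of `f` along the coset `(j, k)` are the coefficients
of `G(g, a, b)` against `x ↦ e^{-2πi k b x / v} f(x + j a / s)`, which has the same norm as `f`.
So `G(g, a / s, b / v)` is Bessel with bound `s v B`.
-/

open scoped FourierTransform ComplexConjugate

lemma gaborCoef_eq_integral_fourierChar (g f : ℝ → ℂ) (a b : ℝ) (m n : ℤ) :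
    gaborCoef g a b f m n = ∫ x, 𝐞 (-(n * b * x)) * f x * conj (g (x - m * a)) := by
  refine integral_congr_ae (Filter.Eventually.of_forall fun x => ?_)
  simp only [AddChar.map_neg_eq_inv, Circle.coe_inv_eq_conj, Real.fourierChar_apply, map_mul]
  rw [show 2 * Real.pi * (n * b * x) = 2 * Real.pi * n * b * x by ring]
  ring

lemma gaborCoef_mul_mul (g f : ℝ → ℂ) (a b : ℝ) (r u m n : ℤ) :
    gaborCoef g (a * r) (b * u) f m n = gaborCoef g a b f (r * m) (u * n) := by
  simp only [gaborCoef_eq_integral_fourierChar, Int.cast_mul, mul_comm (r : ℝ), mul_comm (u : ℝ),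
    mul_assoc]

noncomputable def modTranslate (f : ℝ → ℂ) (c t : ℝ) (x : ℝ) : ℂ :=
  𝐞 (-(t * x)) * f (x + c)

lemma norm_modTranslate (f : ℝ → ℂ) (c t x : ℝ) : ‖modTranslate f c t x‖ = ‖f (x + c)‖ := by
  rw [modTranslate, norm_mul, Circle.norm_coe, one_mul]

lemma MeasureTheory.MemLp.modTranslate {f : ℝ → ℂ} (hf : MemLp f 2 volume) (c t : ℝ) :
    MemLp (modTranslate f c t) 2 volume := by
  have hshift : MemLp (fun x => f (x + c)) 2 volume :=
    hf.comp_measurePreserving (measurePreserving_add_right volume c)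
  have hchar : Continuous fun x : ℝ => (𝐞 (-(t * x)) : ℂ) := by fun_prop
  exact hshift.of_le (hchar.aestronglyMeasurable.mul hshift.aestronglyMeasurable)
    (Filter.Eventually.of_forall fun x => (norm_modTranslate f c t x).le)

lemma integral_norm_modTranslate_sq (f : ℝ → ℂ) (c t : ℝ) :
    ∫ x, ‖modTranslate f c t x‖ ^ 2 = ∫ x, ‖f x‖ ^ 2 := by
  simp only [norm_modTranslate]
  exact integral_add_right_eq_self (fun x => ‖f x‖ ^ 2) c

lemma norm_gaborCoef_eq_modTranslate (g f : ℝ → ℂ) {a b a' b' c t : ℝ} {m n m' n' : ℤ}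
    (hm : m' * a' = m * a + c) (hn : n' * b' = n * b + t) :
    ‖gaborCoef g a' b' f m' n'‖ = ‖gaborCoef g a b (modTranslate f c t) m n‖ := by
  have hphase (x : ℝ) : -(n' * b' * (x + c)) = -(n' * b' * c) + (-(n * b * x) + -(t * x)) := by
    rw [hn]; ring
  have hshift (x : ℝ) : x + c - m' * a' = x - m * a := by rw [hm]; ring
  rw [gaborCoef_eq_integral_fourierChar, gaborCoef_eq_integral_fourierChar,
    ← integral_add_right_eq_self _ c]
  calc _ = ‖𝐞 (-(n' * b' * c)) *
        ∫ x, 𝐞 (-(n * b * x)) * modTranslate f c t x * conj (g (x - m * a))‖ := by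
        rw [← integral_const_mul]
        congr 1
        refine integral_congr_ae (Filter.Eventually.of_forall fun x => ?_)
        simp only [hphase, hshift, AddChar.map_add_eq_mul, Circle.coe_mul, modTranslate]
        ring
    _ = _ := by rw [norm_mul, Circle.norm_coe, one_mul]

lemma summable_and_tsum_le_of_equiv_prod {ι κ β : Type*} [Fintype ι] (e : ι × κ ≃ β)
    {F : β → ℝ} (hF : 0 ≤ F) {C : ℝ}
    (h : ∀ i, Summable (fun k => F (e (i, k))) ∧ ∑' k, F (e (i, k)) ≤ C) :
    Summable F ∧ ∑' b, F b ≤ Fintype.card ι * C := by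
  have hFe : Summable (F ∘ e) :=
    (summable_prod_of_nonneg fun _ => hF _).2 ⟨fun i => (h i).1, .of_finite⟩
  refine ⟨e.summable_iff.1 hFe, ?_⟩
  calc ∑' b, F b = ∑' p, (F ∘ e) p := (e.tsum_eq F).symm
    _ = ∑ i, ∑' k, F (e (i, k)) := by rw [hFe.tsum_prod' fun i => (h i).1, tsum_fintype]; rfl
    _ ≤ ∑ _i : ι, C := Finset.sum_le_sum fun i _ => (h i).2
    _ = Fintype.card ι * C := by simp

lemma GaborBessel.div_natCast {g : ℝ → ℂ} {a b : ℝ} (h : GaborBessel g a b) (s v : ℕ)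
    [NeZero s] [NeZero v] : GaborBessel g (a / s) (b / v) := by
  obtain ⟨B, hB, hBes⟩ := h
  have := NeZero.pos s
  have := NeZero.pos v
  refine ⟨s * v * B, by positivity, fun f hf => ?_⟩
  let e : (Fin s × Fin v) × (ℤ × ℤ) ≃ ℤ × ℤ :=
    (Equiv.prodComm _ _).trans <| (Equiv.prodProdProdComm ℤ ℤ (Fin s) (Fin v)).trans <|
      (Int.divModEquiv s).symm.prodCongr (Int.divModEquiv v).symm
  have he (jk : Fin s × Fin v) (p : ℤ × ℤ) : e (jk, p) = (p.1 * s + jk.1, p.2 * v + jk.2) := rfl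
  have hslice (jk : Fin s × Fin v) (p : ℤ × ℤ) :
      ‖gaborCoef g (a / s) (b / v) f (p.1 * s + jk.1) (p.2 * v + jk.2)‖ =
        ‖gaborCoef g a b (modTranslate f (jk.1 * (a / s)) (jk.2 * (b / v))) p.1 p.2‖ :=
    norm_gaborCoef_eq_modTranslate g f (by push_cast; field_simp) (by push_cast; field_simp)
  have key := summable_and_tsum_le_of_equiv_prod e
    (F := fun p => ‖gaborCoef g (a / s) (b / v) f p.1 p.2‖ ^ 2) (fun _ => by positivity)
    (C := B * ∫ x, ‖f x‖ ^ 2) fun jk => ?_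
  · simpa [mul_assoc] using key
  · simp only [he, hslice]
    rw [← integral_norm_modTranslate_sq f (jk.1 * (a / s)) (jk.2 * (b / v))]
    exact hBes _ (hf.modTranslate _ _)

lemma GaborBessel.mul_intCast {g : ℝ → ℂ} {a b : ℝ} (h : GaborBessel g a b) {r u : ℤ}
    (hr : r ≠ 0) (hu : u ≠ 0) : GaborBessel g (a * r) (b * u) := by
  obtain ⟨B, hB, hBes⟩ := h
  refine ⟨B, hB, fun f hf => ?_⟩
  obtain ⟨hsum, hle⟩ := hBes f hf
  have hinj : Function.Injective (Prod.map (r * ·) (u * ·)) :=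
    (mul_right_injective₀ hr).prodMap (mul_right_injective₀ hu)
  have hsub : (fun p : ℤ × ℤ => ‖gaborCoef g (a * r) (b * u) f p.1 p.2‖ ^ 2) =
      (fun p : ℤ × ℤ => ‖gaborCoef g a b f p.1 p.2‖ ^ 2) ∘ Prod.map (r * ·) (u * ·) := by
    ext p
    simp [gaborCoef_mul_mul]
  rw [hsub]
  exact ⟨hsum.comp_injective hinj,
    (tsum_comp_le_tsum_of_inj hsum (fun _ => by positivity) hinj).trans hle⟩

theorem gabor_bessel_rational_rescaling_general
    (g : ℝ → ℂ) (a b : ℝ)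
    (hBes : GaborBessel g a b)
    (q₁ q₂ : ℚ) (hq₁ : 0 < q₁) (hq₂ : 0 < q₂) :
    GaborBessel g (a * q₁) (b * q₂) := by
  have hsplit (c : ℝ) (q : ℚ) : c * q = c / q.den * q.num := by rw [Rat.cast_def]; ring
  rw [hsplit a, hsplit b]
  have := NeZero.mk q₁.den_nz
  have := NeZero.mk q₂.den_nz
  exact (hBes.div_natCast q₁.den q₂.den).mul_intCast (Rat.num_pos.2 hq₁).ne'
    (Rat.num_pos.2 hq₂).ne'

/-- If G(g, a, b) is Bessel, then G(g, a·q₁, b·q₂) is Bessel for all positive rationals q₁, q₂. -/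
theorem gabor_bessel_rational_rescaling
    (g : ℝ → ℂ) (hg : MemLp g 2 volume) (hgne : ¬ g =ᵐ[volume] 0)
    (a b : ℝ) (ha : 0 < a) (hb : 0 < b)
    (hBes : GaborBessel g a b)
    (q₁ q₂ : ℚ) (hq₁ : 0 < q₁) (hq₂ : 0 < q₂) :
    GaborBessel g (a * q₁) (b * q₂) :=
  gabor_bessel_rational_rescaling_general g a b hBes q₁ q₂ hq₁ hq₂
end

section
/- Let H be a separable Hilbert space, {f_n} a Bessel sequence in H, and suppose there are bounded operators L_1,…,L_r on H and Bessel sequences {f_{k,n}}_n (k = 1,…,r) with Σ_{k=1}^r L_k F_k = I, where F_k is the analysis operator of {f_{k,n}} composed appropriately. Then for all f ∈ H, Σ_{k=1}^r ‖L_k‖ (Σ_n |⟨f, f_{k,n}⟩|²)^{1/2} ≥ ‖f‖, and consequently the concatenated sequence {f_{k,n}}_{1≤k≤r, n} is a frame for H. -/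
/-!
The coefficients of `F k x` in the Hilbert basis `e` are `⟪f k n, x⟫`, so by Parseval
`‖F k x‖² = Σₙ |⟪f k n, x⟫|²`. Applying `Σₖ L k ∘ F k = id` to `x` and the triangle inequality
give `‖x‖ ≤ Σₖ ‖L k‖ ‖F k x‖`; Cauchy–Schwarz turns this into the lower frame bound
`‖x‖² ≤ (Σₖ ‖L k‖²) Σₖ ‖F k x‖²`, while `‖F k x‖ ≤ ‖F k‖ ‖x‖` gives the upper one.
-/

open scoped InnerProductSpace

theorem HasSum.prod_of_fintype_left {α β γ : Type*} [AddCommMonoid α] [TopologicalSpace α]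
    [ContinuousAdd α] [Fintype β] {f : β × γ → α} {a : β → α}
    (h : ∀ b, HasSum (fun c => f (b, c)) (a b)) : HasSum f (∑ b, a b) := by
  classical
  have hfiber : ∀ b, HasSum (fun p : β × γ => if p.1 = b then f p else 0) (a b) := by
    intro b
    rw [← (Prod.mk_right_injective b).hasSum_iff]
    · simpa [Function.comp_def] using h b
    · rintro ⟨b', c⟩ hp
      simp only [ite_eq_right_iff]
      rintro rfl
      exact absurd ⟨c, rfl⟩ hp
  simpa [Finset.sum_ite_eq'] using hasSum_sum (s := Finset.univ) fun b _ => hfiber b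

section InnerProductSpace

variable {ι 𝕜 E : Type*} [RCLike 𝕜] [NormedAddCommGroup E] [InnerProductSpace 𝕜 E]

theorem Orthonormal.inner_right_of_hasSum {v : ι → E} (hv : Orthonormal 𝕜 v) {c : ι → 𝕜}
    {y : E} (h : HasSum (fun i => c i • v i) y) (i : ι) : ⟪v i, y⟫_𝕜 = c i := by
  classical
  refine (h.mapL (innerSL 𝕜 (v i))).unique ?_
  convert hasSum_ite_eq i (c i) using 1
  ext j
  rcases eq_or_ne j i with rfl | hji
  · simp [hv.1 j]
  · simp [hv.inner_eq_zero hji.symm, hji]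

theorem HilbertBasis.hasSum_norm_sq_of_hasSum (b : HilbertBasis ι 𝕜 E) {c : ι → 𝕜} {y : E}
    (h : HasSum (fun i => c i • b i) y) : HasSum (fun i => ‖c i‖ ^ 2) (‖y‖ ^ 2) := by
  have := lp.hasSum_norm (p := 2) (by norm_num) (b.repr y)
  simpa [b.repr_apply_apply, b.orthonormal.inner_right_of_hasSum h] using this

end InnerProductSpace

section OperatorSum

variable {ι 𝕜 E G : Type*} [Fintype ι] [NontriviallyNormedField 𝕜]
  [NormedAddCommGroup E] [NormedSpace 𝕜 E] [NormedAddCommGroup G] [NormedSpace 𝕜 G]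

theorem norm_le_sum_opNorm_mul_norm_of_sum_comp_eq_id (L : ι → G →L[𝕜] E)
    (F : ι → E →L[𝕜] G) (hLF : ∑ k, (L k).comp (F k) = ContinuousLinearMap.id 𝕜 E) (x : E) :
    ‖x‖ ≤ ∑ k, ‖L k‖ * ‖F k x‖ :=
  calc ‖x‖ = ‖∑ k, L k (F k x)‖ := by
        simpa using congrArg (fun T : E →L[𝕜] E => ‖T x‖) hLF.symm
    _ ≤ ∑ k, ‖L k (F k x)‖ := norm_sum_le _ _
    _ ≤ ∑ k, ‖L k‖ * ‖F k x‖ := Finset.sum_le_sum fun k _ => (L k).le_opNorm _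

theorem sq_norm_le_mul_sum_sq_norm_of_sum_comp_eq_id (L : ι → G →L[𝕜] E)
    (F : ι → E →L[𝕜] G) (hLF : ∑ k, (L k).comp (F k) = ContinuousLinearMap.id 𝕜 E) (x : E) :
    ‖x‖ ^ 2 ≤ (∑ k, ‖L k‖ ^ 2) * ∑ k, ‖F k x‖ ^ 2 :=
  calc ‖x‖ ^ 2 ≤ (∑ k, ‖L k‖ * ‖F k x‖) ^ 2 :=
        pow_le_pow_left₀ (norm_nonneg x)
          (norm_le_sum_opNorm_mul_norm_of_sum_comp_eq_id L F hLF x) 2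
    _ ≤ (∑ k, ‖L k‖ ^ 2) * ∑ k, ‖F k x‖ ^ 2 := Finset.sum_mul_sq_le_sq_mul_sq _ _ _

theorem sum_sq_norm_apply_le (F : ι → E →L[𝕜] G) (x : E) :
    ∑ k, ‖F k x‖ ^ 2 ≤ (∑ k, ‖F k‖ ^ 2) * ‖x‖ ^ 2 :=
  calc ∑ k, ‖F k x‖ ^ 2 ≤ ∑ k, ‖F k‖ ^ 2 * ‖x‖ ^ 2 := Finset.sum_le_sum fun k _ => by
        rw [← mul_pow]
        exact pow_le_pow_left₀ (norm_nonneg _) ((F k).le_opNorm x) 2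
    _ = (∑ k, ‖F k‖ ^ 2) * ‖x‖ ^ 2 := (Finset.sum_mul _ _ _).symm

end OperatorSum

theorem isFrame_of_hasSum {ι H : Type*} [NormedAddCommGroup H] [InnerProductSpace ℂ H]
    {f : ι → H} (s : H → ℝ) {A B : ℝ} (hA : 0 < A) (hB : 0 < B)
    (hs : ∀ x, HasSum (fun i => ‖⟪f i, x⟫_ℂ‖ ^ 2) (s x))
    (hlower : ∀ x, A * ‖x‖ ^ 2 ≤ s x) (hupper : ∀ x, s x ≤ B * ‖x‖ ^ 2) : IsFrame f :=
  ⟨A, B, hA, hB, fun x => ⟨(hs x).summable, (hs x).tsum_eq ▸ hlower x, (hs x).tsum_eq ▸ hupper x⟩⟩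

theorem concatenated_frame_of_left_inverse_sum_general
    {H : Type*} [NormedAddCommGroup H] [InnerProductSpace ℂ H]
    (e : HilbertBasis ℕ ℂ H) (r : ℕ) (f : Fin r → ℕ → H)
    (F : Fin r → H →L[ℂ] H)
    (hF : ∀ k, ∀ x : H, HasSum (fun n => (inner ℂ (f k n) x : ℂ) • (e n : H)) (F k x))
    (L : Fin r → H →L[ℂ] H)
    (hL : ∑ k, (L k).comp (F k) = ContinuousLinearMap.id ℂ H) :
    (∀ x : H, ‖x‖ ≤ ∑ k, ‖L k‖ * Real.sqrt (∑' n, ‖(inner ℂ (f k n) x : ℂ)‖ ^ 2)) ∧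
    IsFrame (fun p : Fin r × ℕ => f p.1 p.2) := by
  have hParseval : ∀ k x, HasSum (fun n => ‖(inner ℂ (f k n) x : ℂ)‖ ^ 2) (‖F k x‖ ^ 2) :=
    fun k x => e.hasSum_norm_sq_of_hasSum (hF k x)
  refine ⟨fun x => ?_, ?_⟩
  · simpa only [fun k => (hParseval k x).tsum_eq, Real.sqrt_sq (norm_nonneg _)] using
      norm_le_sum_opNorm_mul_norm_of_sum_comp_eq_id L F hL x
  refine isFrame_of_hasSum (fun x => ∑ k, ‖F k x‖ ^ 2) (A := (∑ k, ‖L k‖ ^ 2 + 1)⁻¹)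
    (B := ∑ k, ‖F k‖ ^ 2 + 1) (by positivity) (by positivity)
    (fun x => HasSum.prod_of_fintype_left fun k => hParseval k x) (fun x => ?_) (fun x => ?_)
  · rw [inv_mul_le_iff₀ (by positivity)]
    calc ‖x‖ ^ 2 ≤ (∑ k, ‖L k‖ ^ 2) * ∑ k, ‖F k x‖ ^ 2 :=
          sq_norm_le_mul_sum_sq_norm_of_sum_comp_eq_id L F hL x
      _ ≤ (∑ k, ‖L k‖ ^ 2 + 1) * ∑ k, ‖F k x‖ ^ 2 := by gcongr; linarith
  · calc ∑ k, ‖F k x‖ ^ 2 ≤ (∑ k, ‖F k‖ ^ 2) * ‖x‖ ^ 2 := sum_sq_norm_apply_le F x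
      _ ≤ (∑ k, ‖F k‖ ^ 2 + 1) * ‖x‖ ^ 2 := by gcongr; linarith

/-- If bounded operators L₁,…,L_r recombine the analysis operators of r Bessel sequences into
the identity, then Σ_k ‖L_k‖ (Σ_n |⟨f,f_{k,n}⟩|²)^{1/2} ≥ ‖f‖ and the concatenated sequence
is a frame. -/
theorem concatenated_frame_of_left_inverse_sum
    {H : Type*} [NormedAddCommGroup H] [InnerProductSpace ℂ H] [CompleteSpace H]
    [TopologicalSpace.SeparableSpace H]
    (e : HilbertBasis ℕ ℂ H) (r : ℕ) (f : Fin r → ℕ → H)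
    (hBes : ∀ k, IsBessel (f k))
    (F : Fin r → H →L[ℂ] H)
    (hF : ∀ k, ∀ x : H, HasSum (fun n => (inner ℂ (f k n) x : ℂ) • (e n : H)) (F k x))
    (L : Fin r → H →L[ℂ] H)
    (hL : ∑ k, (L k).comp (F k) = ContinuousLinearMap.id ℂ H) :
    (∀ x : H, ‖x‖ ≤ ∑ k, ‖L k‖ * Real.sqrt (∑' n, ‖(inner ℂ (f k n) x : ℂ)‖ ^ 2)) ∧
    IsFrame (fun p : Fin r × ℕ => f p.1 p.2) :=
  concatenated_frame_of_left_inverse_sum_general e r f F hF L hL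
end
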